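/- If f' ⊂ Ξ_{Φ'} and f'' ⊂ Ξ_{Φ''} are regular asynchronous systems with input sets U', U'' satisfying U' ∩ U'' ≠ ∅, then the parallel connection f'||f'', defined on U' ∩ U'' by (f'||f'')(u) = f'(u) × f''(u), is regular with generator function Φ'||Φ'': that is, (f'||f'')(u) ⊆ Ξ_{Φ'||Φ''}(u) for all u ∈ U' ∩ U''. Its initial state function is u ↦ φ'_0(u) × φ''_0(u) and its computation function is ((μ',μ''),u) ↦ π'(μ',u) × π''(μ'',u). -/

import Mathlib

/-!
Regularity of `f' ‖ f''` reduces to merging two progressive functions `ρ'`, `ρ''` into one for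
`Φ' ‖ Φ''`. Both are re-indexed along a common strictly increasing enumeration `e` of the union of
their times: at a point of `e` that is not a time of `ρ`, the re-indexed function carries the zero
vector, and `Φ^0` is the identity, so the run is unchanged. Once the times agree, the iterates of
`Φ' ‖ Φ''` split coordinatewise into those of `Φ'` and `Φ''`. The statements on the initial state
and computation functions are bookkeeping on products of sets of signals.
-/

open scoped Classical

namespace AS

/-- A sequence `α : ℕ → 𝔹ⁿ` is progressive if every coordinate takes the value 1 infinitely often. -/
def ProgSeq {n : ℕ} (α : ℕ → Fin n → Bool) : Prop :=
  ∀ i : Fin n, {k : ℕ | α k i = true}.Infinite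

/-- Identification of `𝔹^{n'} × 𝔹^{n''}` with `𝔹^{n'+n''}`. -/
def app {n' n'' : ℕ} (x : Fin n' → Bool) (y : Fin n'' → Bool) : Fin (n' + n'') → Bool :=
  Fin.addCases x y

/-- The first `n'` coordinates. -/
def fstPart {n' n'' : ℕ} (μ : Fin (n' + n'') → Bool) : Fin n' → Bool :=
  fun i => μ (Fin.castAdd n'' i)

/-- The last `n''` coordinates. -/
def sndPart {n' n'' : ℕ} (μ : Fin (n' + n'') → Bool) : Fin n'' → Bool :=
  fun i => μ (Fin.natAdd n' i)

/-- Parallel connection of generator functions. -/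
def par {n' n'' m : ℕ} (Φ' : (Fin n' → Bool) → (Fin m → Bool) → Fin n' → Bool)
    (Φ'' : (Fin n'' → Bool) → (Fin m → Bool) → Fin n'' → Bool) :
    (Fin (n' + n'') → Bool) → (Fin m → Bool) → Fin (n' + n'') → Bool :=
  fun μ lam => app (Φ' (fstPart μ) lam) (Φ'' (sndPart μ) lam)

/-- `μ` with coordinate `j` complemented. -/
def negAt {n : ℕ} (μ : Fin n → Bool) (j : Fin n) : Fin n → Bool :=
  Function.update μ j (!(μ j))

/-- Boolean partial derivative of `Φ_i` with respect to `μ_j`. -/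
def bderiv {n m : ℕ} (Φ : (Fin n → Bool) → (Fin m → Bool) → Fin n → Bool)
    (i j : Fin n) (μ : Fin n → Bool) (lam : Fin m → Bool) : Bool :=
  xor (Φ μ lam i) (Φ (negAt μ j) lam i)

/-- `Φ^ν`. -/
def nuAct {n m : ℕ} (Φ : (Fin n → Bool) → (Fin m → Bool) → Fin n → Bool)
    (ν μ : Fin n → Bool) (lam : Fin m → Bool) : Fin n → Bool :=
  fun i => xor ((!(ν i)) && μ i) (ν i && Φ μ lam i)

/-- The iterates: `iter Φ α lam μ 0 = ω₋₁ = μ`, `iter Φ α lam μ (k+1) = ωₖ = Φ^{α k}(ω_{k-1}, lam k)`. -/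
def iter {n m : ℕ} (Φ : (Fin n → Bool) → (Fin m → Bool) → Fin n → Bool)
    (α : ℕ → Fin n → Bool) (lam : ℕ → Fin m → Bool) (μ : Fin n → Bool) : ℕ → Fin n → Bool
  | 0 => μ
  | k + 1 => nuAct Φ (α k) (iter Φ α lam μ k) (lam k)

/-- A strictly increasing sequence of reals, unbounded from above. -/
def IsSeq (t : ℕ → ℝ) : Prop :=
  StrictMono t ∧ ∀ T : ℝ, ∃ k, T < t k

/-- The function `ρ(s) = ⊕ₖ α(k)·χ_{{t_k}}(s)`. -/
noncomputable def progFun {n : ℕ} (α : ℕ → Fin n → Bool) (t : ℕ → ℝ) : ℝ → Fin n → Bool :=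
  fun s i => decide (∃ k, s = t k ∧ α k i = true)

/-- A progressive function `ℝ → 𝔹ⁿ`. -/
def IsProgFun {n : ℕ} (ρ : ℝ → Fin n → Bool) : Prop :=
  ∃ α t, ProgSeq α ∧ IsSeq t ∧ ρ = progFun α t

/-- The data of a progressive function: a progressive sequence of vectors on an
unbounded strictly increasing support sequence. -/
structure PF (n : ℕ) where
  α : ℕ → Fin n → Bool
  t : ℕ → ℝ
  mono : StrictMono t
  unbdd : ∀ T : ℝ, ∃ k, T < t k
  prog : ProgSeq α

/-- The underlying progressive function `ℝ → 𝔹ⁿ` of `ρ : PF n`. -/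
noncomputable def PF.toFun {n : ℕ} (ρ : PF n) : ℝ → Fin n → Bool := progFun ρ.α ρ.t

/-- The signal `Φ^ρ(μ,u,·)`. -/
noncomputable def PF.run {n m : ℕ} (Φ : (Fin n → Bool) → (Fin m → Bool) → Fin n → Bool)
    (ρ : PF n) (μ : Fin n → Bool) (u : ℝ → Fin m → Bool) : ℝ → Fin n → Bool :=
  fun s => iter Φ ρ.α (fun k => u (ρ.t k)) μ (Nat.find (ρ.unbdd s))

/-- The universal regular asynchronous system generated by `Φ`. -/
def Xi {n m : ℕ} (Φ : (Fin n → Bool) → (Fin m → Bool) → Fin n → Bool)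
    (u : ℝ → Fin m → Bool) : Set (ℝ → Fin n → Bool) :=
  {x | ∃ (μ : Fin n → Bool) (ρ : PF n), x = PF.run Φ ρ μ u}

/-- `μ` is the initial value `x(-∞+0)` of `x`. -/
def InitVal {n : ℕ} (x : ℝ → Fin n → Bool) (μ : Fin n → Bool) : Prop :=
  ∃ T : ℝ, ∀ s < T, x s = μ

/-- Projection of a progressive function onto the first `n'` coordinates. -/
def PF.fst {n' n'' : ℕ} (ρ : PF (n' + n'')) : PF n' :=
  ⟨fun k => fstPart (ρ.α k), ρ.t, ρ.mono, ρ.unbdd, fun i => ρ.prog (Fin.castAdd n'' i)⟩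

/-- Projection of a progressive function onto the last `n''` coordinates. -/
def PF.snd {n' n'' : ℕ} (ρ : PF (n' + n'')) : PF n'' :=
  ⟨fun k => sndPart (ρ.α k), ρ.t, ρ.mono, ρ.unbdd, fun i => ρ.prog (Fin.natAdd n' i)⟩

/-- `x` is a signal: eventually constant to the left, piecewise constant on `[t_k, t_{k+1})`. -/
def IsSignal {n : ℕ} (x : ℝ → Fin n → Bool) : Prop :=
  ∃ (μ : Fin n → Bool) (t : ℕ → ℝ), IsSeq t ∧ (∀ s, s < t 0 → x s = μ) ∧
    ∀ k, ∀ s, t k ≤ s → s < t (k + 1) → x s = x (t k)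

end AS

/-- The parallel connection `(f'||f'')(u) = f'(u) × f''(u)` of two sets of signals. -/
def prodSet {n' n'' : ℕ} (X' : Set (ℝ → Fin n' → Bool)) (X'' : Set (ℝ → Fin n'' → Bool)) :
    Set (ℝ → Fin (n' + n'') → Bool) :=
  {z | ∃ x' ∈ X', ∃ x'' ∈ X'', z = fun s => AS.app (x' s) (x'' s)}

open Set

section NatFind

variable {β : Type*} [LinearOrder β] {t : ℕ → β}

theorem lt_find_exists_lt_iff (ht : Monotone t) {x : β} (h : ∃ k, x < t k) {j : ℕ} :
    j < Nat.find h ↔ t j ≤ x := by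
  simp only [Nat.lt_find_iff, not_lt]
  exact ⟨fun H => H j le_rfl, fun hj i hi => (ht hi).trans hj⟩

theorem lt_find_exists_le_iff (ht : Monotone t) {x : β} (h : ∃ k, x ≤ t k) {j : ℕ} :
    j < Nat.find h ↔ t j < x := by
  simp only [Nat.lt_find_iff, not_le]
  exact ⟨fun H => H j le_rfl, fun hj i hi => (ht hi).trans_lt hj⟩

end NatFind

theorem exists_isLeast_inter_Ioi {β : Type*} [LinearOrder β] {A : Set β}
    (hfin : ∀ T, (A ∩ Iic T).Finite) (hub : ∀ a, ∃ b ∈ A, a < b) (a : β) :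
    ∃ x, IsLeast (A ∩ Ioi a) x := by
  obtain ⟨b, hbA, hab⟩ := hub a
  obtain ⟨x, ⟨hxA, hax, hxb⟩, hmin⟩ :=
    ((hfin b).subset fun y hy => ⟨hy.1, hy.2.2⟩ : (A ∩ Ioc a b).Finite).exists_minimal
      ⟨b, hbA, hab, le_rfl⟩
  refine ⟨x, ⟨hxA, hax⟩, fun y ⟨hyA, hay⟩ => ?_⟩
  rcases le_total y b with hyb | hby
  · exact le_of_not_gt fun hyx => hyx.not_ge (hmin ⟨hyA, hay, hyb⟩ hyx.le)
  · exact hxb.trans hby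

theorem exists_strictMono_unbounded_subset_range {β : Type*} [LinearOrder β] {A : Set β}
    (hfin : ∀ T, (A ∩ Iic T).Finite) (hub : ∀ a, ∃ b ∈ A, a < b) {a₀ : β}
    (ha₀ : ∀ b ∈ A, a₀ < b) :
    ∃ e : ℕ → β, StrictMono e ∧ (∀ T, ∃ k, T < e k) ∧ A ⊆ range e := by
  choose next hnext using exists_isLeast_inter_Ioi hfin hub
  obtain ⟨e, he0, hesucc⟩ : ∃ e : ℕ → β, e 0 = a₀ ∧ ∀ k, e (k + 1) = next (e k) :=
    ⟨fun k => Nat.rec a₀ (fun _ x => next x) k, rfl, fun _ => rfl⟩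
  have he : StrictMono e := strictMono_nat_of_lt_succ fun k => hesucc k ▸ (hnext (e k)).1.2
  have hunb : ∀ T, ∃ k, T < e k := by
    intro T
    by_contra! hT
    have hsub : range e ⊆ insert a₀ (A ∩ Iic T) := by
      rintro _ ⟨_ | k, rfl⟩
      · exact he0 ▸ mem_insert _ _
      · exact mem_insert_of_mem _ ⟨hesucc k ▸ (hnext (e k)).1.1, hT (k + 1)⟩
    exact infinite_range_of_injective he.injective (((hfin T).insert a₀).subset hsub)
  refine ⟨e, he, hunb, fun b hb => ?_⟩
  have hex : ∃ k, b ≤ e k := (hunb b).imp fun _ => le_of_lt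
  obtain ⟨k, hk⟩ : ∃ k, Nat.find hex = k + 1 :=
    Nat.exists_eq_succ_of_ne_zero fun h0 => by
      have : b ≤ e 0 := h0 ▸ Nat.find_spec hex
      exact (ha₀ b hb).not_ge (he0 ▸ this)
  have hkb : e k < b := lt_of_not_ge (Nat.find_min hex (by omega))
  have hbk : b ≤ e (k + 1) := hk ▸ Nat.find_spec hex
  exact ⟨k + 1, le_antisymm (hesucc k ▸ (hnext (e k)).2 ⟨hb, hkb⟩) hbk⟩

namespace AS

section Par

variable {n' n'' m : ℕ} (Φ' : (Fin n' → Bool) → (Fin m → Bool) → Fin n' → Bool)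
  (Φ'' : (Fin n'' → Bool) → (Fin m → Bool) → Fin n'' → Bool)

@[simp]
theorem fstPart_app (x : Fin n' → Bool) (y : Fin n'' → Bool) : fstPart (app x y) = x := by
  funext i; simp [fstPart, app]

@[simp]
theorem sndPart_app (x : Fin n' → Bool) (y : Fin n'' → Bool) : sndPart (app x y) = y := by
  funext i; simp [sndPart, app]

theorem app_fstPart_sndPart (w : Fin (n' + n'') → Bool) : app (fstPart w) (sndPart w) = w := by
  funext i
  refine Fin.addCases (fun j => ?_) (fun j => ?_) i <;> simp [app, fstPart, sndPart]

theorem nuAct_par_app (ν' μ' : Fin n' → Bool) (ν'' μ'' : Fin n'' → Bool) (lam : Fin m → Bool) :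
    nuAct (par Φ' Φ'') (app ν' ν'') (app μ' μ'') lam =
      app (nuAct Φ' ν' μ' lam) (nuAct Φ'' ν'' μ'' lam) := by
  funext i
  refine Fin.addCases (fun j => ?_) (fun j => ?_) i <;> simp [nuAct, par, app]

theorem iter_par_app (α' : ℕ → Fin n' → Bool) (α'' : ℕ → Fin n'' → Bool)
    (lam : ℕ → Fin m → Bool) (μ' : Fin n' → Bool) (μ'' : Fin n'' → Bool) (k : ℕ) :
    iter (par Φ' Φ'') (fun j => app (α' j) (α'' j)) lam (app μ' μ'') k =
      app (iter Φ' α' lam μ' k) (iter Φ'' α'' lam μ'' k) := by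
  induction k with
  | zero => rfl
  | succ k ih => simp only [iter, ih, nuAct_par_app]

end Par

section Stutter

variable {n m : ℕ} (Φ : (Fin n → Bool) → (Fin m → Bool) → Fin n → Bool)

theorem nuAct_false (μ : Fin n → Bool) (lam : Fin m → Bool) :
    nuAct Φ (fun _ => false) μ lam = μ := by
  funext i; simp [nuAct]

theorem iter_eq_iter_of_stutter {α β : ℕ → Fin n → Bool} {lam lam' : ℕ → Fin m → Bool}
    {c : ℕ → ℕ} (hc₀ : c 0 = 0)
    (hstep : ∀ k, (c (k + 1) = c k + 1 ∧ β k = α (c k) ∧ lam' k = lam (c k)) ∨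
      (c (k + 1) = c k ∧ β k = fun _ => false))
    (μ : Fin n → Bool) (k : ℕ) : iter Φ β lam' μ k = iter Φ α lam μ (c k) := by
  induction k with
  | zero => rw [hc₀]; rfl
  | succ k ih =>
    rcases hstep k with ⟨hc, hβ, hlam⟩ | ⟨hc, hβ⟩
    · simp only [iter, hc, hβ, hlam, ih]
    · simp only [iter, hc, hβ, ih, nuAct_false]

end Stutter

namespace PF

variable {n m : ℕ}

theorem preimage_t_Iic (ρ : PF n) (s : ℝ) : ρ.t ⁻¹' Iic s = Iio (Nat.find (ρ.unbdd s)) :=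
  ext fun _ => (lt_find_exists_lt_iff ρ.mono.monotone _).symm

theorem finite_range_t_inter_Iic (ρ : PF n) (T : ℝ) : (range ρ.t ∩ Iic T).Finite := by
  rw [← image_preimage_eq_range_inter, preimage_t_Iic]
  exact (finite_Iio _).image _

noncomputable def countBefore (ρ : PF n) (x : ℝ) : ℕ :=
  Nat.find ((ρ.unbdd x).imp fun _ => le_of_lt)

theorem lt_countBefore_iff {ρ : PF n} {x : ℝ} {j : ℕ} : j < ρ.countBefore x ↔ ρ.t j < x :=
  lt_find_exists_le_iff ρ.mono.monotone _

theorem countBefore_t (ρ : PF n) (j : ℕ) : ρ.countBefore (ρ.t j) = j :=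
  eq_of_forall_lt_iff fun _ => lt_countBefore_iff.trans ρ.mono.lt_iff_lt

noncomputable def refineSeq (ρ : PF n) (e : ℕ → ℝ) (k : ℕ) : Fin n → Bool :=
  if e k ∈ range ρ.t then ρ.α (ρ.countBefore (e k)) else fun _ => false

section Refine

variable (ρ : PF n) {e : ℕ → ℝ} (hcov : range ρ.t ⊆ range e)
include hcov

theorem progSeq_refineSeq : ProgSeq fun k => ρ.refineSeq e k := by
  intro i
  choose g hg using fun j => hcov ⟨j, rfl⟩
  have hg_inj : g.Injective := fun a b hab => ρ.mono.injective (by rw [← hg, ← hg, hab])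
  refine ((ρ.prog i).image hg_inj.injOn).mono ?_
  rintro _ ⟨j, hj, rfl⟩
  simpa [refineSeq, hg, countBefore_t] using hj

variable (he : StrictMono e)
include he

theorem t_lt_e_succ_iff (k j : ℕ) : ρ.t j < e (k + 1) ↔ ρ.t j ≤ e k := by
  obtain ⟨a, ha⟩ := hcov ⟨j, rfl⟩
  rw [← ha, he.lt_iff_lt, he.le_iff_le, Nat.lt_succ_iff]

theorem countBefore_zero : ρ.countBefore (e 0) = 0 :=
  Nat.eq_zero_of_not_pos fun h => by
    obtain ⟨a, ha⟩ := hcov ⟨0, rfl⟩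
    exact (lt_countBefore_iff.1 h).not_ge (ha ▸ he.monotone (Nat.zero_le a))

theorem countBefore_succ_of_eq {k j : ℕ} (h : e k = ρ.t j) :
    ρ.countBefore (e (k + 1)) = j + 1 :=
  eq_of_forall_lt_iff fun i => by
    rw [lt_countBefore_iff, t_lt_e_succ_iff ρ hcov he, h, ρ.mono.le_iff_le, Nat.lt_succ_iff]

theorem countBefore_succ_of_notMem {k : ℕ} (h : e k ∉ range ρ.t) :
    ρ.countBefore (e (k + 1)) = ρ.countBefore (e k) :=
  eq_of_forall_lt_iff fun i => by
    rw [lt_countBefore_iff, lt_countBefore_iff, t_lt_e_succ_iff ρ hcov he,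
      le_iff_lt_or_eq, or_iff_left fun hi => h ⟨i, hi⟩]

theorem countBefore_find (heu : ∀ T, ∃ k, T < e k) (s : ℝ) :
    ρ.countBefore (e (Nat.find (heu s))) = Nat.find (ρ.unbdd s) :=
  eq_of_forall_lt_iff fun i => by
    obtain ⟨a, ha⟩ := hcov ⟨i, rfl⟩
    rw [lt_countBefore_iff, lt_find_exists_lt_iff ρ.mono.monotone, ← ha, he.lt_iff_lt,
      lt_find_exists_lt_iff he.monotone]

noncomputable def refine (heu : ∀ T, ∃ k, T < e k) : PF n :=
  ⟨ρ.refineSeq e, e, he, heu, progSeq_refineSeq ρ hcov⟩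

theorem run_refine (heu : ∀ T, ∃ k, T < e k)
    (Φ : (Fin n → Bool) → (Fin m → Bool) → Fin n → Bool) (μ : Fin n → Bool) (u : ℝ → Fin m → Bool) :
    (ρ.refine hcov he heu).run Φ μ u = ρ.run Φ μ u := by
  funext s
  have hstep : ∀ k, (ρ.countBefore (e (k + 1)) = ρ.countBefore (e k) + 1 ∧
      ρ.refineSeq e k = ρ.α (ρ.countBefore (e k)) ∧
      u (e k) = u (ρ.t (ρ.countBefore (e k)))) ∨
      (ρ.countBefore (e (k + 1)) = ρ.countBefore (e k) ∧ ρ.refineSeq e k = fun _ => false) := by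
    intro k
    by_cases hk : e k ∈ range ρ.t
    · obtain ⟨j, hj⟩ := hk
      have hα : ρ.refineSeq e k = ρ.α j := by
        rw [refineSeq, if_pos ⟨j, hj⟩, ← hj, countBefore_t]
      rw [hα, ← hj, countBefore_t, countBefore_succ_of_eq ρ hcov he hj.symm]
      exact Or.inl ⟨rfl, rfl, rfl⟩
    · exact Or.inr ⟨countBefore_succ_of_notMem ρ hcov he hk, if_neg hk⟩
  refine (iter_eq_iter_of_stutter Φ (c := fun k => ρ.countBefore (e k))
    (lam := fun j => u (ρ.t j)) (countBefore_zero ρ hcov he) hstep μ _).trans ?_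
  exact congrArg (iter Φ ρ.α (fun j => u (ρ.t j)) μ) (countBefore_find ρ hcov he heu s)

end Refine

/-- The times of `ρ''` are ignored: this is meant for `ρ'.t = ρ''.t`. -/
def append {n' n'' : ℕ} (ρ' : PF n') (ρ'' : PF n'') : PF (n' + n'') where
  α k := app (ρ'.α k) (ρ''.α k)
  t := ρ'.t
  mono := ρ'.mono
  unbdd := ρ'.unbdd
  prog i := by
    refine Fin.addCases (fun i => ?_) (fun i => ?_) i
    · simpa [app] using ρ'.prog i
    · simpa [app] using ρ''.prog i

theorem run_append {n' n'' : ℕ} {ρ' : PF n'} {ρ'' : PF n''} (h : ρ'.t = ρ''.t)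
    (Φ' : (Fin n' → Bool) → (Fin m → Bool) → Fin n' → Bool)
    (Φ'' : (Fin n'' → Bool) → (Fin m → Bool) → Fin n'' → Bool)
    (μ' : Fin n' → Bool) (μ'' : Fin n'' → Bool) (u : ℝ → Fin m → Bool) :
    (ρ'.append ρ'').run (par Φ' Φ'') (app μ' μ'') u =
      fun s => app (ρ'.run Φ' μ' u s) (ρ''.run Φ'' μ'' u s) := by
  obtain ⟨α'', t'', _, _, _⟩ := ρ''
  subst h
  funext s
  exact iter_par_app Φ' Φ'' _ _ _ μ' μ'' _

theorem exists_run_par_eq {n' n'' : ℕ} (ρ' : PF n') (ρ'' : PF n'')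
    (Φ' : (Fin n' → Bool) → (Fin m → Bool) → Fin n' → Bool)
    (Φ'' : (Fin n'' → Bool) → (Fin m → Bool) → Fin n'' → Bool)
    (μ' : Fin n' → Bool) (μ'' : Fin n'' → Bool) (u : ℝ → Fin m → Bool) :
    ∃ ρ : PF (n' + n''), ρ.run (par Φ' Φ'') (app μ' μ'') u =
      fun s => app (ρ'.run Φ' μ' u s) (ρ''.run Φ'' μ'' u s) := by
  have hA : ∀ x ∈ range ρ'.t ∪ range ρ''.t, min (ρ'.t 0) (ρ''.t 0) - 1 < x := by
    rintro _ (⟨j, rfl⟩ | ⟨j, rfl⟩)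
    · linarith [min_le_left (ρ'.t 0) (ρ''.t 0), ρ'.mono.monotone (Nat.zero_le j)]
    · linarith [min_le_right (ρ'.t 0) (ρ''.t 0), ρ''.mono.monotone (Nat.zero_le j)]
  obtain ⟨e, he, heu, hcov⟩ := exists_strictMono_unbounded_subset_range
    (fun T => by
      rw [union_inter_distrib_right]
      exact (ρ'.finite_range_t_inter_Iic T).union (ρ''.finite_range_t_inter_Iic T))
    (fun a => (ρ'.unbdd a).elim fun k hk => ⟨_, Or.inl ⟨k, rfl⟩, hk⟩) hA
  have hcov' : range ρ'.t ⊆ range e := subset_union_left.trans hcov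
  have hcov'' : range ρ''.t ⊆ range e := subset_union_right.trans hcov
  refine ⟨(ρ'.refine hcov' he heu).append (ρ''.refine hcov'' he heu), ?_⟩
  rw [run_append (ρ' := ρ'.refine hcov' he heu) (ρ'' := ρ''.refine hcov'' he heu) rfl,
    run_refine, run_refine]

end PF

theorem initVal_app_iff {n' n'' : ℕ} {x' : ℝ → Fin n' → Bool} {x'' : ℝ → Fin n'' → Bool}
    {μ : Fin (n' + n'') → Bool} :
    InitVal (fun s => app (x' s) (x'' s)) μ ↔ InitVal x' (fstPart μ) ∧ InitVal x'' (sndPart μ) := by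
  constructor
  · rintro ⟨T, h⟩
    exact ⟨⟨T, fun s hs => by rw [← h s hs, fstPart_app]⟩,
      ⟨T, fun s hs => by rw [← h s hs, sndPart_app]⟩⟩
  · rintro ⟨⟨T', h'⟩, ⟨T'', h''⟩⟩
    refine ⟨min T' T'', fun s hs => ?_⟩
    dsimp only
    rw [h' s (lt_min_iff.1 hs).1, h'' s (lt_min_iff.1 hs).2, app_fstPart_sndPart]

end AS

theorem prodSet_subset_Xi_par {n' n'' m : ℕ}
    {Φ' : (Fin n' → Bool) → (Fin m → Bool) → Fin n' → Bool}
    {Φ'' : (Fin n'' → Bool) → (Fin m → Bool) → Fin n'' → Bool} {u : ℝ → Fin m → Bool}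
    {X' : Set (ℝ → Fin n' → Bool)} {X'' : Set (ℝ → Fin n'' → Bool)}
    (h' : X' ⊆ AS.Xi Φ' u) (h'' : X'' ⊆ AS.Xi Φ'' u) :
    prodSet X' X'' ⊆ AS.Xi (AS.par Φ' Φ'') u := by
  rintro _ ⟨_, hx', _, hx'', rfl⟩
  obtain ⟨μ', ρ', rfl⟩ := h' hx'
  obtain ⟨μ'', ρ'', rfl⟩ := h'' hx''
  obtain ⟨ρ, hρ⟩ := ρ'.exists_run_par_eq ρ'' Φ' Φ'' μ' μ'' u
  exact ⟨AS.app μ' μ'', ρ, hρ.symm⟩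

theorem setOf_initVal_prodSet {n' n'' : ℕ} (X' : Set (ℝ → Fin n' → Bool))
    (X'' : Set (ℝ → Fin n'' → Bool)) :
    {μ | ∃ z ∈ prodSet X' X'', AS.InitVal z μ} =
      {μ | ∃ μ' ∈ {μ | ∃ x ∈ X', AS.InitVal x μ}, ∃ μ'' ∈ {μ | ∃ x ∈ X'', AS.InitVal x μ},
        μ = AS.app μ' μ''} := by
  ext μ
  constructor
  · rintro ⟨_, ⟨x', hx', x'', hx'', rfl⟩, h⟩
    obtain ⟨h', h''⟩ := AS.initVal_app_iff.1 h
    exact ⟨_, ⟨x', hx', h'⟩, _, ⟨x'', hx'', h''⟩, (AS.app_fstPart_sndPart μ).symm⟩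
  · rintro ⟨μ', ⟨x', hx', h'⟩, μ'', ⟨x'', hx'', h''⟩, rfl⟩
    refine ⟨_, ⟨x', hx', x'', hx'', rfl⟩, AS.initVal_app_iff.2 ?_⟩
    rw [AS.fstPart_app, AS.sndPart_app]
    exact ⟨h', h''⟩

theorem par_regular_general {n' n'' m : ℕ}
    (Φ' : (Fin n' → Bool) → (Fin m → Bool) → Fin n' → Bool)
    (Φ'' : (Fin n'' → Bool) → (Fin m → Bool) → Fin n'' → Bool)
    (U' U'' : Set (ℝ → Fin m → Bool))
    (f' : (ℝ → Fin m → Bool) → Set (ℝ → Fin n' → Bool))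
    (f'' : (ℝ → Fin m → Bool) → Set (ℝ → Fin n'' → Bool))
    (hreg' : ∀ u ∈ U', f' u ⊆ AS.Xi Φ' u) (hreg'' : ∀ u ∈ U'', f'' u ⊆ AS.Xi Φ'' u)
    (φ0' : (ℝ → Fin m → Bool) → Set (Fin n' → Bool))
    (φ0'' : (ℝ → Fin m → Bool) → Set (Fin n'' → Bool))
    (hφ0' : ∀ u ∈ U', φ0' u = {μ | ∃ x ∈ f' u, AS.InitVal x μ})
    (hφ0'' : ∀ u ∈ U'', φ0'' u = {μ | ∃ x ∈ f'' u, AS.InitVal x μ})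
    (π' : (Fin n' → Bool) → (ℝ → Fin m → Bool) → Set (AS.PF n'))
    (π'' : (Fin n'' → Bool) → (ℝ → Fin m → Bool) → Set (AS.PF n''))
    (hπ' : ∀ u ∈ U', f' u = {x | ∃ μ ∈ φ0' u, ∃ ρ ∈ π' μ u, x = AS.PF.run Φ' ρ μ u})
    (hπ'' : ∀ u ∈ U'', f'' u = {x | ∃ μ ∈ φ0'' u, ∃ ρ ∈ π'' μ u, x = AS.PF.run Φ'' ρ μ u}) :
    ∀ u ∈ U' ∩ U'',
      (prodSet (f' u) (f'' u) ⊆ AS.Xi (AS.par Φ' Φ'') u) ∧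
      ({μ | ∃ z ∈ prodSet (f' u) (f'' u), AS.InitVal z μ} =
        {μ | ∃ μ' ∈ φ0' u, ∃ μ'' ∈ φ0'' u, μ = AS.app μ' μ''}) ∧
      (prodSet (f' u) (f'' u) =
        {z | ∃ μ' ∈ φ0' u, ∃ μ'' ∈ φ0'' u, ∃ ρ' ∈ π' μ' u, ∃ ρ'' ∈ π'' μ'' u,
          z = fun s => AS.app (AS.PF.run Φ' ρ' μ' u s) (AS.PF.run Φ'' ρ'' μ'' u s)}) := by
  rintro u ⟨hu', hu''⟩
  refine ⟨prodSet_subset_Xi_par (hreg' u hu') (hreg'' u hu''), ?_, ?_⟩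
  · rw [hφ0' u hu', hφ0'' u hu'']
    exact setOf_initVal_prodSet _ _
  · ext z
    rw [hπ' u hu', hπ'' u hu'']
    constructor
    · rintro ⟨_, ⟨μ', hμ', ρ', hρ', rfl⟩, _, ⟨μ'', hμ'', ρ'', hρ'', rfl⟩, rfl⟩
      exact ⟨μ', hμ', μ'', hμ'', ρ', hρ', ρ'', hρ'', rfl⟩
    · rintro ⟨μ', hμ', μ'', hμ'', ρ', hρ', ρ'', hρ'', rfl⟩
      exact ⟨_, ⟨μ', hμ', ρ', hρ', rfl⟩, _, ⟨μ'', hμ'', ρ'', hρ'', rfl⟩, rfl⟩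

/-- if `f' ⊂ Ξ_{Φ'}` and `f'' ⊂ Ξ_{Φ''}` (with initial state functions `φ₀'`, `φ₀''`
and computation functions `π'`, `π''`) and `U' ∩ U'' ≠ ∅`, then `f'||f'' ⊂ Ξ_{Φ'||Φ''}`, its
initial state function is `φ₀'×φ₀''` and its computation function is `π'×π''`. -/
theorem par_regular {n' n'' m : ℕ}
    (Φ' : (Fin n' → Bool) → (Fin m → Bool) → Fin n' → Bool)
    (Φ'' : (Fin n'' → Bool) → (Fin m → Bool) → Fin n'' → Bool)
    (U' U'' : Set (ℝ → Fin m → Bool)) (hU : (U' ∩ U'').Nonempty)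
    (f' : (ℝ → Fin m → Bool) → Set (ℝ → Fin n' → Bool))
    (f'' : (ℝ → Fin m → Bool) → Set (ℝ → Fin n'' → Bool))
    (hreg' : ∀ u ∈ U', f' u ⊆ AS.Xi Φ' u) (hreg'' : ∀ u ∈ U'', f'' u ⊆ AS.Xi Φ'' u)
    (φ0' : (ℝ → Fin m → Bool) → Set (Fin n' → Bool))
    (φ0'' : (ℝ → Fin m → Bool) → Set (Fin n'' → Bool))
    (hφ0' : ∀ u ∈ U', φ0' u = {μ | ∃ x ∈ f' u, AS.InitVal x μ})
    (hφ0'' : ∀ u ∈ U'', φ0'' u = {μ | ∃ x ∈ f'' u, AS.InitVal x μ})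
    (π' : (Fin n' → Bool) → (ℝ → Fin m → Bool) → Set (AS.PF n'))
    (π'' : (Fin n'' → Bool) → (ℝ → Fin m → Bool) → Set (AS.PF n''))
    (hπ' : ∀ u ∈ U', f' u = {x | ∃ μ ∈ φ0' u, ∃ ρ ∈ π' μ u, x = AS.PF.run Φ' ρ μ u})
    (hπ'' : ∀ u ∈ U'', f'' u = {x | ∃ μ ∈ φ0'' u, ∃ ρ ∈ π'' μ u, x = AS.PF.run Φ'' ρ μ u}) :
    ∀ u ∈ U' ∩ U'',
      (prodSet (f' u) (f'' u) ⊆ AS.Xi (AS.par Φ' Φ'') u) ∧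
      ({μ | ∃ z ∈ prodSet (f' u) (f'' u), AS.InitVal z μ} =
        {μ | ∃ μ' ∈ φ0' u, ∃ μ'' ∈ φ0'' u, μ = AS.app μ' μ''}) ∧
      (prodSet (f' u) (f'' u) =
        {z | ∃ μ' ∈ φ0' u, ∃ μ'' ∈ φ0'' u, ∃ ρ' ∈ π' μ' u, ∃ ρ'' ∈ π'' μ'' u,
          z = fun s => AS.app (AS.PF.run Φ' ρ' μ' u s) (AS.PF.run Φ'' ρ'' μ'' u s)}) :=
  par_regular_general Φ' Φ'' U' U'' f' f'' hreg' hreg'' φ0' φ0'' hφ0' hφ0'' π' π'' hπ' hπ''
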